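/- Let u⁻, u⁺ ∈ [0,V] with u⁻ < u⁺. If ρ̂(u⁺) > ρ̌(u⁻), then the ordering ρ̌(u⁺) < ρ̌(u⁻) < ρ̂(u⁺) < ρ̂(u⁻) holds, and moreover u⁺ − u⁻ ≥ (β/2) · ( ρ̂(u⁻) − ρ̂(u⁺) ). -/

import Mathlib

/-!
Everything rests on the tangent inequality `f y ≤ f x + f' x (y - x) - β/2 (y - x)²`, i.e. on
the concavity of `f + β ρ²/2`. The line `φ_u` is tangent to the concave reduced flux `f_α`, which
vanishes at `0` and at `αR ≤ R`; as `u ≥ 0`, `φ_u ≥ f` at `0` and `R`, so by the intermediate value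
theorem `{f ≥ φ_u} = [ρ̌(u), ρ̂(u)]`, on which `f - φ_u ≥ β/2 (ρ - ρ̌(u)) (ρ̂(u) - ρ)`; and `ρ̃_u`
lies in this interval because `f ≥ f_α`, with equality only at `0`.

The difference `φ_{u⁻} - φ_{u⁺}` is strictly decreasing, `≥ 0` at `ρ̃_{u⁺}` and `≤ 0` at `ρ̃_{u⁻}`.
Comparing its sign with the two contact intervals gives the ordering, and its drop
`(u⁺ - u⁻) (ρ̂(u⁺) - ρ̌(u⁻))` from `ρ̌(u⁻)` to `ρ̂(u⁺)` is at least
`f (ρ̂(u⁺)) - φ_{u⁻} (ρ̂(u⁺)) ≥ β/2 (ρ̂(u⁺) - ρ̌(u⁻)) (ρ̂(u⁻) - ρ̂(u⁺))`.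
-/

open Set

theorem ConcaveOn.le_add_mul_sub_of_hasDerivAt {S : Set ℝ} {f : ℝ → ℝ} {f' x y : ℝ}
    (hf : ConcaveOn ℝ S f) (hx : x ∈ S) (hy : y ∈ S) (hf' : HasDerivAt f f' x) :
    f y ≤ f x + f' * (y - x) := by
  rcases lt_trichotomy x y with hxy | rfl | hyx
  · have h := hf.slope_le_of_hasDerivAt hx hy hxy hf'
    rw [slope_def_field, div_le_iff₀ (sub_pos.2 hxy)] at h
    linarith
  · simp
  · have h := hf.le_slope_of_hasDerivAt hy hx hyx hf'
    rw [slope_def_field, le_div_iff₀ (sub_pos.2 hyx)] at h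
    linarith

theorem le_tangent_sub_sq_of_deriv2_le {D : Set ℝ} (hD : Convex ℝ D) {f f' f'' : ℝ → ℝ} {β : ℝ}
    (hf : ∀ x ∈ D, HasDerivAt f (f' x) x) (hf' : ∀ x ∈ D, HasDerivAt f' (f'' x) x)
    (hf'' : ∀ x ∈ D, f'' x ≤ -β) {x y : ℝ} (hx : x ∈ D) (hy : y ∈ D) :
    f y ≤ f x + f' x * (y - x) - β / 2 * (y - x) ^ 2 := by
  have hg : ∀ x ∈ D, HasDerivAt (fun ρ => f ρ + β / 2 * ρ ^ 2) (f' x + β * x) x :=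
    fun x hx =>
      ((hf x hx).fun_add ((hasDerivAt_pow 2 x).const_mul (β / 2))).congr_deriv (by ring)
  have hg' : ∀ x ∈ D, HasDerivAt (fun ρ => f' ρ + β * ρ) (f'' x + β) x :=
    fun x hx => ((hf' x hx).fun_add ((hasDerivAt_id' x).const_mul β)).congr_deriv (by ring)
  have hconc : ConcaveOn ℝ D fun ρ => f ρ + β / 2 * ρ ^ 2 :=
    concaveOn_of_hasDerivWithinAt2_nonpos hD (HasDerivAt.continuousOn hg)
      (fun x hx => (hg x (interior_subset hx)).hasDerivWithinAt)
      (fun x hx => (hg' x (interior_subset hx)).hasDerivWithinAt)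
      (fun x hx => by linarith [hf'' x (interior_subset hx)])
  have h := hconc.le_add_mul_sub_of_hasDerivAt hx hy (hg x hx)
  linear_combination h

theorem line_add_sq_le_of_mem_Icc {f f' : ℝ → ℝ} {s : Set ℝ} {β c u t a b x : ℝ}
    (hf : ∀ x ∈ s, ∀ y ∈ s, f y ≤ f x + f' x * (y - x) - β / 2 * (y - x) ^ 2)
    (ha : a ∈ s) (hb : b ∈ s) (hx : x ∈ s)
    (hfa : f a = c + u * (a - t)) (hfb : f b = c + u * (b - t)) (hxab : x ∈ Icc a b) :
    c + u * (x - t) + β / 2 * (x - a) * (b - x) ≤ f x := by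
  obtain ⟨hax, hxb⟩ := hxab
  rcases (hax.trans hxb).eq_or_lt with rfl | hab
  · obtain rfl := le_antisymm hxb hax
    simp [hfa]
  -- the tangent inequalities at `x` towards `a` and `b`, weighted by `b - x` and `x - a`
  have key : (b - a) * (c + u * (x - t) + β / 2 * (x - a) * (b - x)) ≤ (b - a) * f x := by
    nlinarith [mul_le_mul_of_nonneg_left (hf x hx a ha) (sub_nonneg.2 hxb),
      mul_le_mul_of_nonneg_left (hf x hx b hb) (sub_nonneg.2 hax)]
  exact le_of_mul_le_mul_left key (sub_pos.2 hab)

theorem mem_Icc_of_le_of_coincidence_bounds {f g : ℝ → ℝ} {p q a b x : ℝ}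
    (hf : ContinuousOn f (Icc p q)) (hg : ContinuousOn g (Icc p q))
    (hp : f p ≤ g p) (hq : f q ≤ g q)
    (ha : a ∈ lowerBounds {ρ | ρ ∈ Icc p q ∧ f ρ = g ρ})
    (hb : b ∈ upperBounds {ρ | ρ ∈ Icc p q ∧ f ρ = g ρ})
    (hx : x ∈ Icc p q) (hgx : g x ≤ f x) : x ∈ Icc a b := by
  have hfg := hf.sub hg
  constructor
  · obtain ⟨z, hz, hz0⟩ := intermediate_value_Icc hx.1 (hfg.mono (Icc_subset_Icc_right hx.2))
      (show (0 : ℝ) ∈ Icc (f p - g p) (f x - g x) from ⟨by linarith, by linarith⟩)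
    exact (ha ⟨Icc_subset_Icc_right hx.2 hz, sub_eq_zero.1 hz0⟩).trans hz.2
  · obtain ⟨z, hz, hz0⟩ := intermediate_value_Icc' hx.2 (hfg.mono (Icc_subset_Icc_left hx.1))
      (show (0 : ℝ) ∈ Icc (f q - g q) (f x - g x) from ⟨by linarith, by linarith⟩)
    exact hz.1.trans (hb ⟨Icc_subset_Icc_left hx.1 hz, sub_eq_zero.1 hz0⟩)

theorem div_mem_Icc_of_mem_Icc_mul {α R t : ℝ} (hα : 0 < α) (ht : t ∈ Icc 0 (α * R)) :
    t / α ∈ Icc 0 R :=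
  ⟨div_nonneg ht.1 hα.le, (div_le_iff₀' hα).2 ht.2⟩

theorem hasDerivAt_mul_comp_div {f : ℝ → ℝ} {d α t : ℝ} (hα : α ≠ 0)
    (hf : HasDerivAt f d (t / α)) : HasDerivAt (fun x => α * f (x / α)) d t :=
  ((hf.comp t ((hasDerivAt_id' t).div_const α)).const_mul α).congr_deriv (by field_simp)

theorem mul_comp_div_le_tangent {f f' : ℝ → ℝ} {s : Set ℝ} {β α t x : ℝ}
    (hf : ∀ x ∈ s, ∀ y ∈ s, f y ≤ f x + f' x * (y - x) - β / 2 * (y - x) ^ 2)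
    (hβ : 0 ≤ β) (hα : 0 < α) (ht : t / α ∈ s) (hx : x / α ∈ s) :
    α * f (x / α) ≤ α * f (t / α) + f' (t / α) * (x - t) := by
  have h := mul_le_mul_of_nonneg_left (hf _ ht _ hx) hα.le
  have hsq : 0 ≤ α * (β / 2 * (x / α - t / α) ^ 2) := by positivity
  have e : α * (f' (t / α) * (x / α - t / α)) = f' (t / α) * (x - t) := by field_simp
  linarith

theorem mul_add_sq_le_comp_mul {f f' : ℝ → ℝ} {s : Set ℝ} {β α y : ℝ}
    (hf : ∀ x ∈ s, ∀ y ∈ s, f y ≤ f x + f' x * (y - x) - β / 2 * (y - x) ^ 2)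
    (hf0 : f 0 = 0) (hα : α ∈ Icc 0 1) (h0 : 0 ∈ s) (hy : y ∈ s) (hαy : α * y ∈ s) :
    α * f y + β / 2 * α * (1 - α) * y ^ 2 ≤ f (α * y) := by
  -- the tangent inequalities at `α y` towards `0` and `y`, weighted by `1 - α` and `α`
  have h0' := mul_le_mul_of_nonneg_left (hf _ hαy _ h0) (sub_nonneg.2 hα.2)
  have hy' := mul_le_mul_of_nonneg_left (hf _ hαy _ hy) hα.1
  rw [hf0] at h0'
  linear_combination h0' + hy'

theorem eq_zero_of_apply_eq_mul_comp_div {f f' : ℝ → ℝ} {s : Set ℝ} {β α t : ℝ}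
    (hf : ∀ x ∈ s, ∀ y ∈ s, f y ≤ f x + f' x * (y - x) - β / 2 * (y - x) ^ 2)
    (hf0 : f 0 = 0) (hβ : 0 < β) (hα : α ∈ Ioo 0 1) (h0 : 0 ∈ s) (ht : t ∈ s)
    (ht' : t / α ∈ s) (heq : f t = α * f (t / α)) : t = 0 := by
  obtain ⟨hα0, hα1⟩ := hα
  have h := mul_add_sq_le_comp_mul hf hf0 ⟨hα0.le, hα1.le⟩ h0 ht'
    ((mul_div_cancel₀ _ hα0.ne').symm ▸ ht)
  rw [mul_div_cancel₀ _ hα0.ne', heq] at h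
  have hmargin : 0 < β / 2 * α * (1 - α) := by
    have := sub_pos.2 hα1
    positivity
  have : t / α = 0 := pow_eq_zero_iff two_ne_zero |>.1 (le_antisymm (by nlinarith) (sq_nonneg _))
  simpa [hα0.ne'] using this

/-- In the application the line `ρ ↦ c + u (ρ - t)` is `φ_u`, with `t = ρ̃_u`, `c = f_α (ρ̃_u)`,
`a = ρ̌(u)` and `b = ρ̂(u)`. -/
structure IsContactInterval (f : ℝ → ℝ) (R β c u t a b : ℝ) : Prop where
  left_mem : a ∈ Icc 0 R
  right_mem : b ∈ Icc 0 R
  apply_left : f a = c + u * (a - t)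
  apply_right : f b = c + u * (b - t)
  mem_Icc_of_le : ∀ x ∈ Icc 0 R, c + u * (x - t) ≤ f x → x ∈ Icc a b
  add_sq_le : ∀ x ∈ Icc a b, c + u * (x - t) + β / 2 * (x - a) * (b - x) ≤ f x
  base_mem : t ∈ Icc a b
  right_eq_zero : f t = c → b = 0

theorem eq_zero_of_apply_eq_deriv_mul {f f' : ℝ → ℝ} {s : Set ℝ} {β b : ℝ}
    (hf : ∀ x ∈ s, ∀ y ∈ s, f y ≤ f x + f' x * (y - x) - β / 2 * (y - x) ^ 2)
    (hf0 : f 0 = 0) (hβ : 0 < β) (h0 : 0 ∈ s) (hb : b ∈ s) (hfb : f b = f' 0 * b) : b = 0 := by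
  have h := hf 0 h0 b hb
  rw [hf0, hfb] at h
  exact pow_eq_zero_iff two_ne_zero |>.1 (le_antisymm (by nlinarith) (sq_nonneg b))

theorem isContactInterval_of_isLeast_of_isGreatest {f f' : ℝ → ℝ} {R β α u t a b : ℝ}
    (hf : ∀ x ∈ Icc 0 R, ∀ y ∈ Icc 0 R, f y ≤ f x + f' x * (y - x) - β / 2 * (y - x) ^ 2)
    (hfc : ContinuousOn f (Icc 0 R)) (hf0 : f 0 = 0) (hfR : f R = 0) (hR : 0 ≤ R)
    (hβ : 0 < β) (hα : α ∈ Ioo 0 1) (hu : 0 ≤ u) (hslope : u = f' (t / α))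
    (ht : t ∈ Icc 0 (α * R))
    (ha : IsLeast {ρ | ρ ∈ Icc 0 R ∧ f ρ = α * f (t / α) + u * (ρ - t)} a)
    (hb : IsGreatest {ρ | ρ ∈ Icc 0 R ∧ f ρ = α * f (t / α) + u * (ρ - t)} b) :
    IsContactInterval f R β (α * f (t / α)) u t a b := by
  obtain ⟨hα0, hα1⟩ := hα
  have hαR : α * R ≤ R := mul_le_of_le_one_left hR hα1.le
  have htR : t ∈ Icc 0 R := ⟨ht.1, ht.2.trans hαR⟩
  have ht' : t / α ∈ Icc 0 R := div_mem_Icc_of_mem_Icc_mul hα0 ht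
  have hsupport : ∀ x ∈ Icc 0 (α * R), α * f (x / α) ≤ α * f (t / α) + u * (x - t) :=
    fun x hx =>
      hslope ▸ mul_comp_div_le_tangent hf hβ.le hα0 ht' (div_mem_Icc_of_mem_Icc_mul hα0 hx)
  have hreduced : α * f (t / α) + β / 2 * α * (1 - α) * (t / α) ^ 2 ≤ f t := by
    simpa only [mul_div_cancel₀ _ hα0.ne'] using mul_add_sq_le_comp_mul hf hf0
      ⟨hα0.le, hα1.le⟩ ⟨le_rfl, hR⟩ ht' ((mul_div_cancel₀ _ hα0.ne').symm ▸ htR)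
  have hmargin : 0 ≤ β / 2 * α * (1 - α) * (t / α) ^ 2 :=
    mul_nonneg (mul_nonneg (by positivity) (sub_nonneg.2 hα1.le)) (sq_nonneg _)
  have hmem_of_le : ∀ x ∈ Icc 0 R, α * f (t / α) + u * (x - t) ≤ f x → x ∈ Icc a b := by
    refine fun x hx hlx => mem_Icc_of_le_of_coincidence_bounds
      (g := fun ρ => α * f (t / α) + u * (ρ - t)) hfc (by fun_prop) ?_ ?_ ha.2 hb.2 hx hlx
    · simpa [hf0] using hsupport 0 ⟨le_rfl, mul_nonneg hα0.le hR⟩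
    · have h := hsupport (α * R) ⟨mul_nonneg hα0.le hR, le_rfl⟩
      rw [mul_div_cancel_left₀ _ hα0.ne', hfR] at h
      rw [hfR]
      linarith [mul_le_mul_of_nonneg_left (sub_le_sub_right hαR t) hu]
  refine ⟨ha.1.1, hb.1.1, ha.1.2, hb.1.2, hmem_of_le,
    fun x hx => line_add_sq_le_of_mem_Icc hf ha.1.1 hb.1.1
      (Icc_subset_Icc ha.1.1.1 hb.1.1.2 hx) ha.1.2 hb.1.2 hx,
    hmem_of_le t htR (by linarith), fun hft => ?_⟩
  obtain rfl := eq_zero_of_apply_eq_mul_comp_div hf hf0 hβ ⟨hα0, hα1⟩ ⟨le_rfl, hR⟩ htR ht' hft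
  exact eq_zero_of_apply_eq_deriv_mul hf hf0 hβ ⟨le_rfl, hR⟩ hb.1.1
    (by simpa [hf0, hslope] using hb.1.2)

theorem line_sub_line_le_of_le (c₁ t₁ c₂ t₂ : ℝ) {u₁ u₂ x y : ℝ} (hu : u₁ ≤ u₂) (hxy : x ≤ y) :
    c₁ + u₁ * (y - t₁) - (c₂ + u₂ * (y - t₂)) ≤ c₁ + u₁ * (x - t₁) - (c₂ + u₂ * (x - t₂)) := by
  nlinarith [mul_nonneg (sub_nonneg.2 hu) (sub_nonneg.2 hxy)]

theorem line_sub_line_lt_of_lt (c₁ t₁ c₂ t₂ : ℝ) {u₁ u₂ x y : ℝ} (hu : u₁ < u₂) (hxy : x < y) :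
    c₁ + u₁ * (y - t₁) - (c₂ + u₂ * (y - t₂)) < c₁ + u₁ * (x - t₁) - (c₂ + u₂ * (x - t₂)) := by
  nlinarith [mul_pos (sub_pos.2 hu) (sub_pos.2 hxy)]

namespace IsContactInterval

variable {f : ℝ → ℝ} {R β c u t a b c₁ u₁ t₁ a₁ b₁ c₂ u₂ t₂ a₂ b₂ : ℝ}

theorem line_le (h : IsContactInterval f R β c u t a b) (hβ : 0 ≤ β) {x : ℝ}
    (hx : x ∈ Icc a b) : c + u * (x - t) ≤ f x := by
  have hmargin : 0 ≤ β / 2 * (x - a) * (b - x) :=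
    mul_nonneg (mul_nonneg (by positivity) (sub_nonneg.2 hx.1)) (sub_nonneg.2 hx.2)
  linarith [h.add_sq_le x hx]

theorem line_le_at_left (h₁ : IsContactInterval f R β c₁ u₁ t₁ a₁ b₁)
    (h₂ : IsContactInterval f R β c₂ u₂ t₂ a₂ b₂) (hβ : 0 ≤ β) (hu : u₁ ≤ u₂)
    (hc₂ : c₂ ≤ c₁ + u₁ * (t₂ - t₁)) (hab : a₁ ≤ b₂) : c₂ + u₂ * (a₁ - t₂) ≤ f a₁ := by
  by_contra! hlt
  have ha : a₁ < a₂ := by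
    by_contra! ha
    exact hlt.not_ge (h₂.line_le hβ ⟨ha, hab⟩)
  have := line_sub_line_le_of_le c₁ t₁ c₂ t₂ hu (ha.le.trans h₂.base_mem.1)
  rw [h₁.apply_left] at hlt
  linarith

theorem line_le_at_right (h₁ : IsContactInterval f R β c₁ u₁ t₁ a₁ b₁)
    (h₂ : IsContactInterval f R β c₂ u₂ t₂ a₂ b₂) (hβ : 0 ≤ β) (hu : u₁ ≤ u₂)
    (hc₁ : c₁ ≤ c₂ + u₂ * (t₁ - t₂)) (hab : a₁ ≤ b₂) : c₁ + u₁ * (b₂ - t₁) ≤ f b₂ := by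
  by_contra! hlt
  have hb : b₁ < b₂ := by
    by_contra! hb
    exact hlt.not_ge (h₁.line_le hβ ⟨hab, hb⟩)
  have := line_sub_line_le_of_le c₁ t₁ c₂ t₂ hu (h₁.base_mem.2.trans hb.le)
  rw [h₂.apply_right] at hlt
  linarith

theorem left_lt_left (h₁ : IsContactInterval f R β c₁ u₁ t₁ a₁ b₁)
    (h₂ : IsContactInterval f R β c₂ u₂ t₂ a₂ b₂) (hβ : 0 ≤ β) (hu : u₁ < u₂)
    (hc₂ : c₂ ≤ c₁ + u₁ * (t₂ - t₁)) (hab : a₁ < b₂) : a₂ < a₁ := by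
  have hle := (h₂.mem_Icc_of_le a₁ h₁.left_mem (h₁.line_le_at_left h₂ hβ hu.le hc₂ hab.le)).1
  refine hle.lt_of_ne fun heq => ?_
  -- both lines pass through `(a₁, f a₁)`, so the base point `t₂` cannot lie to its right
  have ht : t₂ ≤ a₁ := by
    by_contra! ht
    have := line_sub_line_lt_of_lt c₁ t₁ c₂ t₂ hu ht
    have := h₂.apply_left
    rw [heq, h₁.apply_left] at this
    linarith
  have ht₂ : t₂ = a₂ := le_antisymm (heq ▸ ht) h₂.base_mem.1
  have hb₂ := h₂.right_eq_zero (by rw [ht₂, h₂.apply_left, ht₂]; ring)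
  linarith [h₁.left_mem.1]

theorem right_lt_right (h₁ : IsContactInterval f R β c₁ u₁ t₁ a₁ b₁)
    (h₂ : IsContactInterval f R β c₂ u₂ t₂ a₂ b₂) (hβ : 0 ≤ β) (hu : u₁ < u₂)
    (hc₁ : c₁ ≤ c₂ + u₂ * (t₁ - t₂)) (hab : a₁ < b₂) : b₂ < b₁ := by
  have hle := (h₁.mem_Icc_of_le b₂ h₂.right_mem (h₁.line_le_at_right h₂ hβ hu.le hc₁ hab.le)).2
  refine hle.lt_of_ne fun heq => ?_
  have ht : b₂ ≤ t₁ := by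
    by_contra! ht
    have := line_sub_line_lt_of_lt c₁ t₁ c₂ t₂ hu ht
    have := h₁.apply_right
    rw [← heq, h₂.apply_right] at this
    linarith
  have ht₁ : t₁ = b₁ := le_antisymm h₁.base_mem.2 (heq ▸ ht)
  have hb₁ := h₁.right_eq_zero (by rw [ht₁, h₁.apply_right, ht₁]; ring)
  linarith [h₁.left_mem.1]

theorem mul_sub_le_slope_sub (h₁ : IsContactInterval f R β c₁ u₁ t₁ a₁ b₁)
    (h₂ : IsContactInterval f R β c₂ u₂ t₂ a₂ b₂) (hβ : 0 ≤ β) (hu : u₁ < u₂)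
    (hc₁ : c₁ ≤ c₂ + u₂ * (t₁ - t₂)) (hc₂ : c₂ ≤ c₁ + u₁ * (t₂ - t₁)) (hab : a₁ < b₂) :
    β / 2 * (b₁ - b₂) ≤ u₂ - u₁ := by
  have hl := h₁.line_le_at_left h₂ hβ hu.le hc₂ hab.le
  have hr := h₁.add_sq_le b₂ ⟨hab.le, (h₁.right_lt_right h₂ hβ hu hc₁ hab).le⟩
  rw [h₁.apply_left] at hl
  rw [h₂.apply_right] at hr
  -- `(u₂ - u₁) (b₂ - a₁)` is the drop of the difference of the two lines between `a₁` and `b₂`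
  have key : (b₂ - a₁) * (β / 2 * (b₁ - b₂)) ≤ (b₂ - a₁) * (u₂ - u₁) := by
    linear_combination hl + hr
  exact le_of_mul_le_mul_left key (sub_pos.2 hab)

end IsContactInterval

theorem stmt_16_general
    (R β B α V : ℝ) (f f' f'' : ℝ → ℝ)
    (hR : 0 < R) (hβ : 0 < β) (hα : α ∈ Set.Ioo (0:ℝ) 1)
    (hf0 : f 0 = 0) (hfR : f R = 0)
    (hfd1 : ∀ ρ ∈ Set.Icc (0:ℝ) R, HasDerivAt f (f' ρ) ρ)
    (hfd2 : ∀ ρ ∈ Set.Icc (0:ℝ) R, HasDerivAt f' (f'' ρ) ρ)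
    (hconc : ∀ ρ ∈ Set.Icc (0:ℝ) R, -B ≤ f'' ρ ∧ f'' ρ ≤ -β)
    (rt : ℝ → ℝ)
    (hrt : ∀ u ∈ Set.Icc (0:ℝ) V, rt u ∈ Set.Icc (0:ℝ) (α * R) ∧
      HasDerivAt (fun x => α * f (x / α)) u (rt u))
    (rc rh : ℝ → ℝ)
    (hrc : ∀ u ∈ Set.Icc (0:ℝ) V, IsLeast
      {ρ : ℝ | ρ ∈ Set.Icc (0:ℝ) R ∧ f ρ = α * f (rt u / α) + u * (ρ - rt u)} (rc u))
    (hrh : ∀ u ∈ Set.Icc (0:ℝ) V, IsGreatest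
      {ρ : ℝ | ρ ∈ Set.Icc (0:ℝ) R ∧ f ρ = α * f (rt u / α) + u * (ρ - rt u)} (rh u))
    :
    ∀ um ∈ Set.Icc (0:ℝ) V, ∀ up ∈ Set.Icc (0:ℝ) V,
      um < up → rc um < rh up →
      (rc up < rc um ∧ rc um < rh up ∧ rh up < rh um) ∧
      up - um ≥ (β / 2) * (rh um - rh up) := by
  have hf : ∀ x ∈ Icc 0 R, ∀ y ∈ Icc 0 R, f y ≤ f x + f' x * (y - x) - β / 2 * (y - x) ^ 2 :=
    fun x hx y hy => le_tangent_sub_sq_of_deriv2_le (convex_Icc 0 R) hfd1 hfd2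
      (fun ρ hρ => (hconc ρ hρ).2) hx hy
  have hbase : ∀ u ∈ Icc 0 V, rt u / α ∈ Icc 0 R :=
    fun u hu => div_mem_Icc_of_mem_Icc_mul hα.1 (hrt u hu).1
  have hslope : ∀ u ∈ Icc 0 V, u = f' (rt u / α) :=
    fun u hu => (hrt u hu).2.unique (hasDerivAt_mul_comp_div hα.1.ne' (hfd1 _ (hbase u hu)))
  have hI : ∀ u ∈ Icc 0 V,
      IsContactInterval f R β (α * f (rt u / α)) u (rt u) (rc u) (rh u) :=
    fun u hu => isContactInterval_of_isLeast_of_isGreatest hf (HasDerivAt.continuousOn hfd1) hf0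
      hfR hR.le hβ hα hu.1 (hslope u hu) (hrt u hu).1 (hrc u hu) (hrh u hu)
  -- `f_α` lies below each of its tangent lines
  have hcross : ∀ u ∈ Icc 0 V, ∀ w ∈ Icc 0 V,
      α * f (rt w / α) ≤ α * f (rt u / α) + u * (rt w - rt u) := by
    intro u hu w hw
    have h := mul_comp_div_le_tangent hf hβ.le hα.1 (hbase u hu) (hbase w hw)
    rwa [← hslope u hu] at h
  intro um hum up hup hu hab
  have h₁ := hI um hum
  have h₂ := hI up hup
  exact ⟨⟨h₁.left_lt_left h₂ hβ.le hu (hcross um hum up hup) hab, hab,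
      h₁.right_lt_right h₂ hβ.le hu (hcross up hup um hum) hab⟩,
    h₁.mul_sub_le_slope_sub h₂ hβ.le hu (hcross up hup um hum) (hcross um hum up hup) hab⟩

theorem stmt_16
    (R β B α V : ℝ) (f v f' f'' v' : ℝ → ℝ)
    (hR : 0 < R) (hβ : 0 < β) (hB : 0 < B) (hα : α ∈ Set.Ioo (0:ℝ) 1)
    (hf0 : f 0 = 0) (hfR : f R = 0)
    (hfv : ∀ ρ ∈ Set.Icc (0:ℝ) R, f ρ = ρ * v ρ)
    (hfd1 : ∀ ρ ∈ Set.Icc (0:ℝ) R, HasDerivAt f (f' ρ) ρ)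
    (hfd2 : ∀ ρ ∈ Set.Icc (0:ℝ) R, HasDerivAt f' (f'' ρ) ρ)
    (hfc : ContinuousOn f'' (Set.Icc (0:ℝ) R))
    (hconc : ∀ ρ ∈ Set.Icc (0:ℝ) R, -B ≤ f'' ρ ∧ f'' ρ ≤ -β)
    (hvd : ∀ ρ ∈ Set.Icc (0:ℝ) R, HasDerivAt v (v' ρ) ρ)
    (hv'neg : ∀ ρ ∈ Set.Ioo (0:ℝ) R, v' ρ < 0)
    (hvnn : ∀ ρ ∈ Set.Icc (0:ℝ) R, 0 ≤ v ρ)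
    (hV : V = v 0)
    (rt : ℝ → ℝ)
    (hrt : ∀ u ∈ Set.Icc (0:ℝ) V, rt u ∈ Set.Icc (0:ℝ) (α * R) ∧
      HasDerivAt (fun x => α * f (x / α)) u (rt u))
    (rc rh : ℝ → ℝ)
    (hrc : ∀ u ∈ Set.Icc (0:ℝ) V, IsLeast
      {ρ : ℝ | ρ ∈ Set.Icc (0:ℝ) R ∧ f ρ = α * f (rt u / α) + u * (ρ - rt u)} (rc u))
    (hrh : ∀ u ∈ Set.Icc (0:ℝ) V, IsGreatest
      {ρ : ℝ | ρ ∈ Set.Icc (0:ℝ) R ∧ f ρ = α * f (rt u / α) + u * (ρ - rt u)} (rh u))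
    :
    ∀ um ∈ Set.Icc (0:ℝ) V, ∀ up ∈ Set.Icc (0:ℝ) V,
      um < up → rc um < rh up →
      (rc up < rc um ∧ rc um < rh up ∧ rh up < rh um) ∧
      up - um ≥ (β / 2) * (rh um - rh up) :=
  stmt_16_general R β B α V f f' f'' hR hβ hα hf0 hfR hfd1 hfd2 hconc rt hrt rc rh hrc hrh
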